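/- Curl-form generalized Prager–Synge inequality: for every w ∈ H^1(T), ||A^{1/2}∇_h(u−w)||^2_{L^2(Ω)} ≤ inf_{τ ∈ S_f(Ω)} ||A^{-1/2}τ + A^{1/2}∇_h w||^2_{L^2(Ω)} + inf_{γ ∈ H̊_D(curl;Ω)} ||A^{1/2}(γ − ∇_h w)||^2_{L^2(Ω)}, in both two and three dimensions. -/
import Mathlib

open RealInnerProductSpace

lemma ps_aux {V : Type*} [NormedAddCommGroup V] [InnerProductSpace ℝ V]
    (a b c : V) (h : ⟪a + b, a - c⟫ = 0) : ‖a‖ ^ 2 ≤ ‖b‖ ^ 2 + ‖c‖ ^ 2 := by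
  have hab := real_inner_comm a b
  have hac := real_inner_comm a c
  have hbc := real_inner_comm b c
  have h' : ⟪a,a⟫ + ⟪b,a⟫ - ⟪a,c⟫ - ⟪b,c⟫ = 0 := by
    have := h; simp only [inner_add_left, inner_sub_right] at this; linarith
  have key : ‖a + a + (b - c)‖ = ‖b + c‖ := by
    have e : ⟪a + a + (b - c), a + a + (b - c)⟫ = ⟪b + c, b + c⟫ := by
      simp only [inner_add_left, inner_add_right, inner_sub_left, inner_sub_right]
      linarith
    have := congrArg Real.sqrt e
    simpa [real_inner_self_eq_norm_sq, Real.sqrt_sq (norm_nonneg _)] using this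
  have tri : ‖a + a‖ ≤ ‖b + c‖ + ‖c - b‖ := by
    calc ‖a + a‖ = ‖(a + a + (b - c)) + (c - b)‖ := by abel_nf
    _ ≤ ‖a + a + (b - c)‖ + ‖c - b‖ := norm_add_le _ _
    _ = ‖b + c‖ + ‖c - b‖ := by rw [key]
  have h2 : ‖a + a‖ = 2 * ‖a‖ := by
    rw [show a + a = (2:ℝ) • a by module, norm_smul]; simp
  have par : ‖b + c‖ ^ 2 + ‖c - b‖ ^ 2 = 2 * (‖b‖ ^ 2 + ‖c‖ ^ 2) := by
    rw [norm_add_sq_real, norm_sub_sq_real]; linarith [real_inner_comm c b]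
  nlinarith [norm_nonneg (b + c), norm_nonneg (c - b), norm_nonneg a,
    sq_nonneg (‖b + c‖ - ‖c - b‖), tri, h2]

theorem curl_form_generalized_prager_synge_inequality
    {V : Type*} [NormedAddCommGroup V] [InnerProductSpace ℝ V]
    {W : Type*} [AddCommGroup W] [Module ℝ W]
    (gradh : W →ₗ[ℝ] V)
    (H1D : Submodule ℝ W)
    (Asqrt : V ≃ₗ[ℝ] V)
    (hAsym : ∀ x y : V, ⟪Asqrt x, y⟫ = ⟪x, Asqrt y⟫)
    (u : W) (hu : u ∈ H1D)
    (Sf : Set V) (hSfne : Sf.Nonempty)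
    (hweak : ∀ τ ∈ Sf, ∀ z ∈ H1D, ⟪Asqrt (Asqrt (gradh u)) + τ, gradh z⟫ = 0)
    (Hcurl0 : Set V)
    (hHcurl0 : Hcurl0 = gradh '' (H1D : Set W)) :
    ∀ w : W,
      ‖Asqrt (gradh (u - w))‖ ^ 2 ≤
        (⨅ τ : Sf, ‖Asqrt.symm (τ : V) + Asqrt (gradh w)‖ ^ 2) +
          ⨅ γ : Hcurl0, ‖Asqrt ((γ : V) - gradh w)‖ ^ 2 := by
  intro w
  have hSfne' : Nonempty Sf := hSfne.to_subtype
  have hγ₀ : gradh u ∈ Hcurl0 := by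
    rw [hHcurl0]; exact ⟨u, hu, rfl⟩
  have hCne : Nonempty Hcurl0 := ⟨⟨gradh u, hγ₀⟩⟩
  set a := Asqrt (gradh (u - w)) with ha
  have key : ∀ τ ∈ Sf, ∀ γ ∈ Hcurl0,
      ‖a‖ ^ 2 ≤ ‖Asqrt.symm τ + Asqrt (gradh w)‖ ^ 2 + ‖Asqrt (γ - gradh w)‖ ^ 2 := by
    intro τ hτ γ hγ
    rw [hHcurl0] at hγ
    obtain ⟨z, hz, rfl⟩ := hγ
    apply ps_aux
    have e1 : a + (Asqrt.symm τ + Asqrt (gradh w)) = Asqrt (gradh u) + Asqrt.symm τ := by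
      rw [ha, map_sub, map_sub]; abel
    have e2 : a - Asqrt (gradh z - gradh w) = Asqrt (gradh (u - z)) := by
      rw [ha]; simp only [map_sub]; abel
    rw [e1, e2, inner_add_left, ← hAsym (Asqrt (gradh u))]
    have e3 : ⟪Asqrt.symm τ, Asqrt (gradh (u - z))⟫ = ⟪τ, gradh (u - z)⟫ := by
      rw [← hAsym, Asqrt.apply_symm_apply]
    rw [e3, ← inner_add_left]
    exact hweak τ hτ (u - z) (H1D.sub_mem hu hz)
  have step2 : ∀ τ : Sf,
      ‖a‖ ^ 2 - (⨅ γ : Hcurl0, ‖Asqrt ((γ : V) - gradh w)‖ ^ 2)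
        ≤ ‖Asqrt.symm (τ : V) + Asqrt (gradh w)‖ ^ 2 := by
    intro τ
    rw [sub_le_iff_le_add, add_comm, ← sub_le_iff_le_add]
    exact le_ciInf fun γ => by
      have := key τ τ.2 γ γ.2; linarith
  have := le_ciInf step2
  linarith [this]
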